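/- Sum of k non-null S-paths with disjoint tree connections gives a half-integral k-packing: let (G,Λ) be a Γ-labeled graph, let T₁,…,T_{2k} be pairwise vertex-disjoint trees in G all of whose arcs are labeled 1_Γ, with marked vertices x_i ∈ T_{2i−1}, y_i ∈ T_{2i}, and suppose the trees T_{2i−1} and T_{2i} are joined by an edge labeled 1_Γ for each i. If P₁,…,P_k are vertex-disjoint paths where P_i is a non-null x_i–y_i path, then the k closed walks W_i = P_i + (the x_i–y_i path through T_{2i−1} ∪ T_{2i}) are all non-null, and every vertex of G lies in at most 2 of W₁,…,W_k; hence G has a half-integral k-packing of non-null cycles. -/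

import Mathlib

/-- The label (ordered product of arc labels) of a walk in a `Γ`-labeled graph,
where the labeling is given as a skew-symmetric function `Λ : V → V → Γ`. -/
def walkLabel {V : Type} {Γ : Type} [Group Γ] (G : SimpleGraph V) (Λ : V → V → Γ) :
    {u v : V} → G.Walk u v → Γ
  | _, _, SimpleGraph.Walk.nil => 1
  | _, _, SimpleGraph.Walk.cons (u := a) (v := b) _ p => Λ a b * walkLabel G Λ p

/-!
Closing `P i` through the two identity-labeled trees adds an identity walk, so the closed walk
`W i` keeps the non-null label of `P i`. A vertex lies on at most one `P i` and in at most one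
`A i ∪ B i`, hence on at most two `W i`. Finally, a non-null closed walk contains a non-null
cycle: if the walk is not a cycle, it either backtracks along a single edge (label `1`) or
contains a closed subwalk at a repeated vertex; either that subwalk is non-null, or cutting it
out gives a shorter walk with the same label.
-/

open Function SimpleGraph Walk

section WalkLabel

variable {V Γ : Type} [Group Γ] {G : SimpleGraph V} {Λ : V → V → Γ}

@[simp] lemma walkLabel_nil {u : V} : walkLabel G Λ (nil : G.Walk u u) = 1 := rfl

@[simp] lemma walkLabel_cons {u v w : V} (h : G.Adj u v) (p : G.Walk v w) :
    walkLabel G Λ (cons h p) = Λ u v * walkLabel G Λ p := rfl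

@[simp] lemma walkLabel_append {u v w : V} (p : G.Walk u v) (q : G.Walk v w) :
    walkLabel G Λ (p.append q) = walkLabel G Λ p * walkLabel G Λ q := by
  induction p with
  | nil => simp
  | cons h p ih => simp [ih, mul_assoc]

lemma walkLabel_eq_one_of_support_subset {S : Set V}
    (hS : ∀ u w, G.Adj u w → u ∈ S → w ∈ S → Λ u w = 1)
    {u v : V} (p : G.Walk u v) (hp : ∀ a ∈ p.support, a ∈ S) : walkLabel G Λ p = 1 := by
  induction p with
  | nil => rfl
  | cons h p ih =>
    simp only [support_cons, List.mem_cons, forall_eq_or_imp] at hp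
    rw [walkLabel_cons, hS _ _ h hp.1 (hp.2 _ p.start_mem_support), ih hp.2, one_mul]

lemma walkLabel_cons_eq_one_of_mem_edges (hskew : ∀ u v, Λ v u = (Λ u v)⁻¹)
    {u v : V} (h : G.Adj u v) (p : G.Walk v u) (hp : p.IsPath) (he : s(u, v) ∈ p.edges) :
    walkLabel G Λ (cons h p) = 1 := by
  cases p with
  | nil => exact (h.ne rfl).elim
  | cons h' p' =>
    obtain ⟨hp', hv⟩ := (cons_isPath_iff _ _).1 hp
    rcases List.mem_cons.1 he with he | he
    · obtain ⟨rfl, -⟩ | ⟨rfl, -⟩ := Sym2.eq_iff.1 he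
      · exact (h.ne rfl).elim
      · rw [eq_nil_iff_nil.2 (isPath_iff_nil.1 hp'), walkLabel_cons, walkLabel_cons, hskew]
        simp
    · exact (hv (p'.snd_mem_support_of_mem_edges he)).elim

end WalkLabel

namespace SimpleGraph.Walk

variable {V : Type} {G : SimpleGraph V}

theorem exists_eq_append_loop_of_not_nodup {u v : V} (p : G.Walk u v)
    (hp : ¬ p.support.Nodup) : ∃ (z : V) (t : G.Walk u z) (c : G.Walk z z) (r : G.Walk z v),
      ¬ c.Nil ∧ p = t.append (c.append r) := by
  classical
  induction p with
  | nil => simp at hp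
  | @cons u b v h q ih =>
    by_cases hq : q.support.Nodup
    · have hu : u ∈ q.support := by
        by_contra hu
        exact hp (support_cons h q ▸ List.nodup_cons.2 ⟨hu, hq⟩)
      exact ⟨u, nil, cons h (q.takeUntil u hu), q.dropUntil u hu, not_nil_cons,
        by simp [q.take_spec hu]⟩
    · obtain ⟨z, t, c, r, hc, rfl⟩ := ih hq
      exact ⟨z, cons h t, c, r, hc, rfl⟩

end SimpleGraph.Walk

section Cycles

variable {V Γ : Type} [Group Γ] {G : SimpleGraph V} {Λ : V → V → Γ}

theorem exists_isCycle_walkLabel_ne_one (hskew : ∀ u v, Λ v u = (Λ u v)⁻¹)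
    {u : V} (w : G.Walk u u) (hw : walkLabel G Λ w ≠ 1) :
    ∃ (z : V) (c : G.Walk z z),
      c.IsCycle ∧ walkLabel G Λ c ≠ 1 ∧ c.support ⊆ w.support := by
  match w, hw with
  | nil, hw => exact (hw rfl).elim
  | cons (v := v) h p, hw =>
    by_cases hp : p.support.Nodup
    · by_cases he : s(u, v) ∈ p.edges
      · exact (hw (walkLabel_cons_eq_one_of_mem_edges hskew h p (IsPath.mk' hp) he)).elim
      · exact ⟨u, cons h p, (cons_isCycle_iff p h).2 ⟨IsPath.mk' hp, he⟩, hw,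
          List.Subset.refl _⟩
    · obtain ⟨z, t, c, r, hc, hpeq⟩ := p.exists_eq_append_loop_of_not_nodup hp
      have hc_pos := not_nil_iff_lt_length.1 hc
      have hp_len : p.length = t.length + (c.length + r.length) := by
        simp only [hpeq, length_append]
      rw [hpeq] at hw ⊢
      by_cases hc1 : walkLabel G Λ c = 1
      · have hw' : walkLabel G Λ (cons h (t.append r)) ≠ 1 := by simpa [hc1] using hw
        obtain ⟨z', c', hcyc, hne, hsub⟩ := exists_isCycle_walkLabel_ne_one hskew _ hw'
        refine ⟨z', c', hcyc, hne, List.Subset.trans hsub fun x => ?_⟩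
        simp only [support_cons, List.mem_cons, mem_support_append_iff]
        tauto
      · obtain ⟨z', c', hcyc, hne, hsub⟩ := exists_isCycle_walkLabel_ne_one hskew c hc1
        refine ⟨z', c', hcyc, hne, List.Subset.trans hsub fun x => ?_⟩
        simp only [support_cons, List.mem_cons, mem_support_append_iff]
        tauto
termination_by w.length
decreasing_by all_goals simp only [length_cons, length_append]; omega

end Cycles

theorem Set.ncard_setOf_mem_le_two {ι α : Type*} [Finite ι] {S T U : ι → Set α}
    (hS : Pairwise (Disjoint on S)) (hT : Pairwise (Disjoint on T))
    (hU : ∀ i, U i ⊆ S i ∪ T i) (a : α) : {i | a ∈ U i}.ncard ≤ 2 :=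
  calc {i | a ∈ U i}.ncard
      ≤ ({i | a ∈ S i} ∪ {i | a ∈ T i}).ncard :=
        Set.ncard_le_ncard (fun i hi => hU i hi) (Set.toFinite _)
    _ ≤ {i | a ∈ S i}.ncard + {i | a ∈ T i}.ncard := Set.ncard_union_le _ _
    _ ≤ 1 + 1 := by
        gcongr <;> rw [Set.ncard_le_one_iff_subsingleton] <;>
          exact subsingleton_setOfPred_mem_iff_pairwise_disjoint.2 ‹_› a

section TreeBridge

variable {V Γ : Type} [Group Γ] {G : SimpleGraph V} {Λ : V → V → Γ}

lemma SimpleGraph.Reachable.exists_walk_of_induce {S : Set V} {x y : S}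
    (h : (G.induce S).Reachable x y) : ∃ q : G.Walk x y, ∀ v ∈ q.support, v ∈ S := by
  obtain ⟨q⟩ := h
  have hq : ∀ v ∈ (q.map (Embedding.induce S).toHom).support, v ∈ S := by
    intro v hv
    rw [Walk.support_map, List.mem_map] at hv
    obtain ⟨s, -, rfl⟩ := hv
    exact s.2
  exact ⟨_, hq⟩

lemma exists_walk_walkLabel_eq_one_of_exists_adj (hskew : ∀ u v, Λ v u = (Λ u v)⁻¹)
    {A B : Set V} (hA : (G.induce A).Preconnected) (hB : (G.induce B).Preconnected)
    (hAid : ∀ u w, G.Adj u w → u ∈ A → w ∈ A → Λ u w = 1)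
    (hBid : ∀ u w, G.Adj u w → u ∈ B → w ∈ B → Λ u w = 1)
    (hjoin : ∃ a ∈ A, ∃ b ∈ B, G.Adj a b ∧ Λ a b = 1)
    {x y : V} (hx : x ∈ A) (hy : y ∈ B) :
    ∃ q : G.Walk y x, walkLabel G Λ q = 1 ∧ ∀ v ∈ q.support, v ∈ A ∪ B := by
  obtain ⟨a, ha, b, hb, hab, hlab⟩ := hjoin
  obtain ⟨qB, hqB⟩ := (hB ⟨y, hy⟩ ⟨b, hb⟩).exists_walk_of_induce
  obtain ⟨qA, hqA⟩ := (hA ⟨a, ha⟩ ⟨x, hx⟩).exists_walk_of_induce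
  refine ⟨qB.append (cons hab.symm qA), ?_, fun v hv => ?_⟩
  · rw [walkLabel_append, walkLabel_cons, walkLabel_eq_one_of_support_subset hBid qB hqB,
      walkLabel_eq_one_of_support_subset hAid qA hqA, hskew, hlab]
    simp
  · rw [mem_support_append_iff, support_cons, List.mem_cons] at hv
    rcases hv with hv | rfl | hv
    · exact Or.inr (hqB v hv)
    · exact Or.inr hb
    · exact Or.inl (hqA v hv)

end TreeBridge

theorem stmt17_general {V Γ : Type} [Group Γ] (G : SimpleGraph V) (Λ : V → V → Γ)
    (hskew : ∀ u v : V, Λ v u = (Λ u v)⁻¹)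
    (k : ℕ) (A B : Fin k → Set V)
    (hAB : ∀ i j : Fin k, Disjoint (A i) (B j))
    (hAA : ∀ i j : Fin k, i ≠ j → Disjoint (A i) (A j))
    (hBB : ∀ i j : Fin k, i ≠ j → Disjoint (B i) (B j))
    (hAtree : ∀ i, (G.induce (A i)).Connected ∧ (G.induce (A i)).IsAcyclic)
    (hBtree : ∀ i, (G.induce (B i)).Connected ∧ (G.induce (B i)).IsAcyclic)
    (hAid : ∀ i, ∀ u w : V, G.Adj u w → u ∈ A i → w ∈ A i → Λ u w = 1)
    (hBid : ∀ i, ∀ u w : V, G.Adj u w → u ∈ B i → w ∈ B i → Λ u w = 1)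
    (hjoin : ∀ i, ∃ a ∈ A i, ∃ b ∈ B i, G.Adj a b ∧ Λ a b = 1)
    (x y : Fin k → V) (hx : ∀ i, x i ∈ A i) (hy : ∀ i, y i ∈ B i)
    (P : ∀ i : Fin k, G.Walk (x i) (y i))
    (hPnn : ∀ i, walkLabel G Λ (P i) ≠ 1)
    (hPdisj : ∀ i j : Fin k, i ≠ j → ∀ v ∈ (P i).support, v ∉ (P j).support) :
    (∃ W : ∀ i : Fin k, G.Walk (x i) (x i),
      (∀ i, walkLabel G Λ (W i) ≠ 1 ∧
        ∀ v ∈ (W i).support, v ∈ (P i).support ∨ v ∈ A i ∨ v ∈ B i) ∧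
      (∀ v : V, {i : Fin k | v ∈ (W i).support}.ncard ≤ 2)) ∧
    (∃ (z : Fin k → V) (c : ∀ i : Fin k, G.Walk (z i) (z i)),
      (∀ i, (c i).IsCycle ∧ walkLabel G Λ (c i) ≠ 1) ∧
      (∀ v : V, {i : Fin k | v ∈ (c i).support}.ncard ≤ 2)) := by
  choose Q hQlabel hQsupp using fun i =>
    exists_walk_walkLabel_eq_one_of_exists_adj hskew (hAtree i).1.preconnected
      (hBtree i).1.preconnected (hAid i) (hBid i) (hjoin i) (hx i) (hy i)
  let W i := (P i).append (Q i)
  have hWlabel i : walkLabel G Λ (W i) ≠ 1 := by simpa [W, hQlabel] using hPnn i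
  have hWsupp i : ∀ v ∈ (W i).support, v ∈ (P i).support ∨ v ∈ A i ∨ v ∈ B i :=
    fun v hv => ((mem_support_append_iff _ _).1 hv).imp_right (hQsupp i v)
  have hWcount (v : V) : {i | v ∈ (W i).support}.ncard ≤ 2 :=
    Set.ncard_setOf_mem_le_two (S := fun i => {v | v ∈ (P i).support})
      (T := fun i => A i ∪ B i)
      (fun i j hij => Set.disjoint_left.2 (hPdisj i j hij))
      (fun i j hij => Set.disjoint_union_left.2
        ⟨Set.disjoint_union_right.2 ⟨hAA i j hij, hAB i j⟩,
          Set.disjoint_union_right.2 ⟨(hAB j i).symm, hBB i j hij⟩⟩)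
      (fun i => hWsupp i) v
  refine ⟨⟨W, fun i => ⟨hWlabel i, hWsupp i⟩, hWcount⟩, ?_⟩
  choose z c hcycle hclabel hcsupp using fun i =>
    exists_isCycle_walkLabel_ne_one hskew _ (hWlabel i)
  exact ⟨z, c, fun i => ⟨hcycle i, hclabel i⟩, fun v =>
    (Set.ncard_le_ncard (fun i hi => hcsupp i hi) (Set.toFinite _)).trans (hWcount v)⟩

/-- Closing k vertex-disjoint non-null paths through pairwise disjoint
identity-labeled trees (joined pairwise by identity edges) gives k non-null
closed walks with every vertex in at most 2 of them; hence a half-integral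
k-packing of non-null cycles. -/
theorem stmt17 {V Γ : Type} [Group Γ] (G : SimpleGraph V) (Λ : V → V → Γ)
    (hskew : ∀ u v : V, Λ v u = (Λ u v)⁻¹)
    (k : ℕ) (A B : Fin k → Set V)
    (hAB : ∀ i j : Fin k, Disjoint (A i) (B j))
    (hAA : ∀ i j : Fin k, i ≠ j → Disjoint (A i) (A j))
    (hBB : ∀ i j : Fin k, i ≠ j → Disjoint (B i) (B j))
    (hAtree : ∀ i, (G.induce (A i)).Connected ∧ (G.induce (A i)).IsAcyclic)
    (hBtree : ∀ i, (G.induce (B i)).Connected ∧ (G.induce (B i)).IsAcyclic)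
    (hAid : ∀ i, ∀ u w : V, G.Adj u w → u ∈ A i → w ∈ A i → Λ u w = 1)
    (hBid : ∀ i, ∀ u w : V, G.Adj u w → u ∈ B i → w ∈ B i → Λ u w = 1)
    (hjoin : ∀ i, ∃ a ∈ A i, ∃ b ∈ B i, G.Adj a b ∧ Λ a b = 1)
    (x y : Fin k → V) (hx : ∀ i, x i ∈ A i) (hy : ∀ i, y i ∈ B i)
    (P : ∀ i : Fin k, G.Walk (x i) (y i))
    (hPpath : ∀ i, (P i).IsPath)
    (hPnn : ∀ i, walkLabel G Λ (P i) ≠ 1)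
    (hPdisj : ∀ i j : Fin k, i ≠ j → ∀ v ∈ (P i).support, v ∉ (P j).support) :
    (∃ W : ∀ i : Fin k, G.Walk (x i) (x i),
      (∀ i, walkLabel G Λ (W i) ≠ 1 ∧
        ∀ v ∈ (W i).support, v ∈ (P i).support ∨ v ∈ A i ∨ v ∈ B i) ∧
      (∀ v : V, {i : Fin k | v ∈ (W i).support}.ncard ≤ 2)) ∧
    (∃ (z : Fin k → V) (c : ∀ i : Fin k, G.Walk (z i) (z i)),
      (∀ i, (c i).IsCycle ∧ walkLabel G Λ (c i) ≠ 1) ∧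
      (∀ v : V, {i : Fin k | v ∈ (c i).support}.ncard ≤ 2)) :=
  stmt17_general G Λ hskew k A B hAB hAA hBB hAtree hBtree hAid hBid hjoin x y hx hy P hPnn hPdisj
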